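/- Let b, c, d be pairwise distinct pure basis elements of the real Cayley–Dickson algebra 𝔸ₙ (all εᵢ = 1) with d ≠ ±(b·c). Then each of the three triples t₁ = (b, c, d), t₂ = (b, b·c, d), t₃ = (c, b·c, d) has a well-defined non-associativity type in {A, B, C, X}, and the ordered triple of types (type(t₁), type(t₂), type(t₃)) is one of the following eight patterns: (A,A,A), (A,C,C), (X,B,B), (B,B,A), (B,X,C), (C,A,B), (C,C,X), (X,X,X). -/

import Mathlib

noncomputable section

/-- The real Cayley–Dickson algebra carrier: `CD 0 = ℝ`, `CD (n+1) = CD n × CD n`. -/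
def CD : ℕ → Type
  | 0 => ℝ
  | n + 1 => CD n × CD n

instance CD.instAddCommGroup : (n : ℕ) → AddCommGroup (CD n)
  | 0 => inferInstanceAs (AddCommGroup ℝ)
  | n + 1 =>
    letI := CD.instAddCommGroup n
    inferInstanceAs (AddCommGroup (CD n × CD n))

instance CD.instModule : (n : ℕ) → Module ℝ (CD n)
  | 0 => inferInstanceAs (Module ℝ ℝ)
  | n + 1 =>
    letI := CD.instModule n
    inferInstanceAs (Module ℝ (CD n × CD n))

/-- The unit of the Cayley–Dickson algebra. -/
def CD.one : (n : ℕ) → CD n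
  | 0 => (1 : ℝ)
  | n + 1 => (CD.one n, 0)

/-- Conjugation: `(a, b)* = (a*, -b)`, identity on `ℝ`. -/
def CD.conj : (n : ℕ) → CD n → CD n
  | 0, a => a
  | n + 1, x => (CD.conj n x.1, -x.2)

/-- Cayley–Dickson multiplication with sign vector `ε`:
`(a,b)·(c,d) = (a·c − ε (n+1) • (d*·b), d·a + b·c*)`. -/
def CD.mul (ε : ℕ → ℝ) : (n : ℕ) → CD n → CD n → CD n
  | 0, a, c => (show ℝ from a) * (show ℝ from c)
  | n + 1, x, y =>
    (CD.mul ε n x.1 y.1 - ε (n + 1) • CD.mul ε n (CD.conj n y.2) x.2,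
     CD.mul ε n y.2 x.1 + CD.mul ε n x.2 (CD.conj n y.1))

/-- The standard basis element `e α` of `CD n`, for `α ⊆ {1,…,n}`. -/
def CD.basis : (n : ℕ) → Finset ℕ → CD n
  | 0, _ => (1 : ℝ)
  | n + 1, α =>
    if n + 1 ∈ α then ((0 : CD n), CD.basis n (α.erase (n + 1)))
    else (CD.basis n α, (0 : CD n))

/-- `α` indexes a pure basis element of `CD n`. -/
def CD.IsPure (n : ℕ) (α : Finset ℕ) : Prop :=
  α.Nonempty ∧ α ⊆ Finset.Icc 1 n

/-- The associator `[x,y,z] = (x·y)·z − x·(y·z)`. -/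
def CD.assoc (ε : ℕ → ℝ) (n : ℕ) (x y z : CD n) : CD n :=
  CD.mul ε n (CD.mul ε n x y) z - CD.mul ε n x (CD.mul ε n y z)

/-- A triad: indices of three pairwise distinct pure basis elements `b, c, d`
with `d ≠ ±(b·c)` (all signs `εᵢ = 1`). -/
def CD.IsTriad (n : ℕ) (α β γ : Finset ℕ) : Prop :=
  CD.IsPure n α ∧ CD.IsPure n β ∧ CD.IsPure n γ ∧
  α ≠ β ∧ α ≠ γ ∧ β ≠ γ ∧
  CD.basis n γ ≠ CD.mul (fun _ => 1) n (CD.basis n α) (CD.basis n β) ∧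
  CD.basis n γ ≠ -CD.mul (fun _ => 1) n (CD.basis n α) (CD.basis n β)

/-- Multiplication with all signs `εᵢ = 1`. -/
abbrev CD.mul1 (n : ℕ) : CD n → CD n → CD n := CD.mul (fun _ => 1) n

/-- Associator with all signs `εᵢ = 1`. -/
abbrev CD.assoc1 (n : ℕ) : CD n → CD n → CD n → CD n := CD.assoc (fun _ => 1) n

/-- The four non-associativity types. -/
inductive NAType
  | A | B | C | X
  deriving DecidableEq

/-- The triple `(x,y,z)` has the given non-associativity type, where the
Type 1, 2 and 3 associators of `(x,y,z)` are `[x,z,y]`, `[x,y,z]`, `[y,x,z]`. -/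
def CD.hasType (n : ℕ) (x y z : CD n) : NAType → Prop
  | NAType.A => CD.assoc1 n x z y ≠ 0 ∧ CD.assoc1 n x y z = 0 ∧ CD.assoc1 n y x z = 0
  | NAType.B => CD.assoc1 n x z y = 0 ∧ CD.assoc1 n x y z ≠ 0 ∧ CD.assoc1 n y x z = 0
  | NAType.C => CD.assoc1 n x z y = 0 ∧ CD.assoc1 n x y z = 0 ∧ CD.assoc1 n y x z ≠ 0
  | NAType.X => CD.assoc1 n x z y ≠ 0 ∧ CD.assoc1 n x y z ≠ 0 ∧ CD.assoc1 n y x z ≠ 0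

/-!
Basis elements multiply up to sign, `e_α · e_β = s(α, β) • e_{α ∆ β}`, so the associator of
three basis elements is a multiple of a basis element which vanishes iff a sign `g = ±1` is `1`.
Writing `χ(α)` for the sign with `e_α* = χ(α) • e_α`, the recursively defined `s` satisfies
`s(α, α) = χ(α)`, `s(α, β) = -χ(α) χ(β) s(β, α)` for `α ≠ β`, `s(α, α ∆ β) = χ(α) s(α, β)` and
`s(α ∆ β, β) = χ(β) s(α, β)`. For a triple of pure basis elements whose indices are independent
over `𝔽₂`, these identities show that the Type 1, 2 and 3 signs multiply to `-1` (so exactly one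
or all three associators are nonzero, and the type is well defined), and that all signs of
`(b, b·c, d)` and `(c, b·c, d)` are determined by the Type 1 and 2 signs of `(b, c, d)` and the
Type 1 sign of `(b, b·c, d)`. The eight choices of these three signs give the eight patterns.
-/

open Finset
open scoped symmDiff

namespace Finset

variable {ι : Type*} [DecidableEq ι]

@[simp] lemma empty_symmDiff (s : Finset ι) : ∅ ∆ s = s := bot_symmDiff s

lemma erase_symmDiff (s t : Finset ι) (a : ι) : (s ∆ t).erase a = s.erase a ∆ t.erase a := by
  ext x; simp only [mem_erase, mem_symmDiff]; tauto

lemma symmDiff_subset_of_subset {s t u : Finset ι} (hs : s ⊆ u) (ht : t ⊆ u) : s ∆ t ⊆ u :=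
  symmDiff_subset_union.trans (union_subset hs ht)

lemma eq_empty_of_subset_Icc_one_zero {s : Finset ℕ} (h : s ⊆ Icc 1 0) : s = ∅ :=
  subset_empty.mp (by simpa using h)

lemma erase_subset_Icc {n : ℕ} {s : Finset ℕ} (h : s ⊆ Icc 1 (n + 1)) :
    s.erase (n + 1) ⊆ Icc 1 n := by
  intro x hx
  have := h (mem_of_mem_erase hx)
  simp only [mem_Icc] at this ⊢
  have := ne_of_mem_erase hx
  omega

lemma subset_Icc_of_notMem {n : ℕ} {s : Finset ℕ} (h : s ⊆ Icc 1 (n + 1)) (hn : n + 1 ∉ s) :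
    s ⊆ Icc 1 n := by
  rw [← erase_eq_of_notMem hn]
  exact erase_subset_Icc h

end Finset

namespace CD

variable {n : ℕ}

lemma ext_succ {x y : CD (n + 1)} (h₁ : x.1 = y.1) (h₂ : x.2 = y.2) : x = y := Prod.ext h₁ h₂

@[simp] lemma fst_zero : (0 : CD (n + 1)).1 = 0 := rfl
@[simp] lemma snd_zero : (0 : CD (n + 1)).2 = 0 := rfl
@[simp] lemma fst_smul (r : ℝ) (x : CD (n + 1)) : (r • x).1 = r • x.1 := rfl
@[simp] lemma snd_smul (r : ℝ) (x : CD (n + 1)) : (r • x).2 = r • x.2 := rfl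
@[simp] lemma fst_neg (x : CD (n + 1)) : (-x).1 = -x.1 := rfl
@[simp] lemma snd_neg (x : CD (n + 1)) : (-x).2 = -x.2 := rfl

@[simp] lemma conj_fst (x : CD (n + 1)) : (conj (n + 1) x).1 = conj n x.1 := rfl
@[simp] lemma conj_snd (x : CD (n + 1)) : (conj (n + 1) x).2 = -x.2 := rfl

@[simp] lemma mul_fst (ε : ℕ → ℝ) (x y : CD (n + 1)) :
    (mul ε (n + 1) x y).1 = mul ε n x.1 y.1 - ε (n + 1) • mul ε n (conj n y.2) x.2 := rfl
@[simp] lemma mul_snd (ε : ℕ → ℝ) (x y : CD (n + 1)) :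
    (mul ε (n + 1) x y).2 = mul ε n y.2 x.1 + mul ε n x.2 (conj n y.1) := rfl

lemma conj_smul : ∀ n (r : ℝ) (x : CD n), conj n (r • x) = r • conj n x
  | 0, _, _ => rfl
  | n + 1, r, x => ext_succ (by simp [conj_smul n]) (by simp)

lemma smul_mul_and_mul_smul (ε : ℕ → ℝ) : ∀ n (r : ℝ) (x y : CD n),
    mul ε n (r • x) y = r • mul ε n x y ∧ mul ε n x (r • y) = r • mul ε n x y
  | 0, r, x, y => ⟨mul_assoc r (show ℝ from x) (show ℝ from y), mul_left_comm _ r _⟩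
  | n + 1, r, x, y => by
    have ih := smul_mul_and_mul_smul ε n r
    constructor <;>
      exact ext_succ (by simp [ih, conj_smul, smul_sub, smul_comm r]) (by simp [ih, conj_smul])

lemma smul_mul (ε : ℕ → ℝ) (r : ℝ) (x y : CD n) : mul ε n (r • x) y = r • mul ε n x y :=
  (smul_mul_and_mul_smul ε n r x y).1

lemma mul_smul (ε : ℕ → ℝ) (r : ℝ) (x y : CD n) : mul ε n x (r • y) = r • mul ε n x y :=
  (smul_mul_and_mul_smul ε n r x y).2

@[simp] lemma zero_mul (ε : ℕ → ℝ) (y : CD n) : mul ε n 0 y = 0 := by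
  simpa using smul_mul ε 0 0 y

@[simp] lemma mul_zero (ε : ℕ → ℝ) (x : CD n) : mul ε n x 0 = 0 := by
  simpa using mul_smul ε 0 x 0

@[simp] lemma conj_zero : conj n 0 = 0 := by
  simpa using conj_smul n 0 0

lemma basis_fst (α : Finset ℕ) :
    (basis (n + 1) α).1 = if n + 1 ∈ α then 0 else basis n α := by
  by_cases h : n + 1 ∈ α
  · rw [if_pos h, basis]; erw [if_pos h]
  · rw [if_neg h, basis]; erw [if_neg h]

lemma basis_snd (α : Finset ℕ) :
    (basis (n + 1) α).2 = if n + 1 ∈ α then basis n (α.erase (n + 1)) else 0 := by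
  by_cases h : n + 1 ∈ α
  · rw [if_pos h, basis]; erw [if_pos h]
  · rw [if_neg h, basis]; erw [if_neg h]

lemma basis_ne_zero : ∀ n (α : Finset ℕ), basis n α ≠ 0
  | 0, _ => show (1 : ℝ) ≠ 0 from one_ne_zero
  | n + 1, α => fun h0 => by
    by_cases h : n + 1 ∈ α
    · exact basis_ne_zero n _ (by simpa [basis_snd, h] using congrArg Prod.snd h0)
    · exact basis_ne_zero n _ (by simpa [basis_fst, h] using congrArg Prod.fst h0)

def conjSign (α : Finset ℕ) : ℝ := if α = ∅ then 1 else -1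

@[simp] lemma conjSign_empty : conjSign ∅ = 1 := if_pos rfl

lemma conjSign_of_nonempty {α : Finset ℕ} (h : α.Nonempty) : conjSign α = -1 :=
  if_neg h.ne_empty

@[simp] lemma conjSign_mul_self (α : Finset ℕ) : conjSign α * conjSign α = 1 := by
  unfold conjSign; split_ifs <;> norm_num

@[simp] lemma conjSign_sq (α : Finset ℕ) : conjSign α ^ 2 = 1 := by
  rw [sq, conjSign_mul_self]

lemma conj_basis : ∀ n (α : Finset ℕ), α ⊆ Icc 1 n → conj n (basis n α) = conjSign α • basis n α
  | 0, α, h => by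
    obtain rfl := eq_empty_of_subset_Icc_one_zero h
    rw [conjSign_empty, one_smul]
    rfl
  | n + 1, α, h => by
    by_cases hn : n + 1 ∈ α
    · rw [conjSign_of_nonempty ⟨_, hn⟩]
      exact ext_succ (by simp [basis_fst, hn]) (by simp [basis_snd, hn])
    · exact ext_succ (by simp [basis_fst, hn, conj_basis n α (subset_Icc_of_notMem h hn)])
        (by simp [basis_snd, hn])

/-- The sign in `e_α · e_β = basisSign n α β • e_{α ∆ β}` (all `εᵢ = 1`). -/
def basisSign : ℕ → Finset ℕ → Finset ℕ → ℝ
  | 0, _, _ => 1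
  | n + 1, α, β =>
    if n + 1 ∈ α then
      if n + 1 ∈ β then
        -conjSign (β.erase (n + 1)) * basisSign n (β.erase (n + 1)) (α.erase (n + 1))
      else conjSign β * basisSign n (α.erase (n + 1)) β
    else
      if n + 1 ∈ β then basisSign n (β.erase (n + 1)) α
      else basisSign n α β

lemma mul_basis : ∀ n (α β : Finset ℕ), α ⊆ Icc 1 n → β ⊆ Icc 1 n →
    mul (fun _ => 1) n (basis n α) (basis n β) = basisSign n α β • basis n (α ∆ β)
  | 0, _, _, _, _ => show (1 : ℝ) * 1 = (1 : ℝ) • (1 : ℝ) by simp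
  | n + 1, α, β, hα, hβ => by
    have hα' := erase_subset_Icc hα
    have hβ' := erase_subset_Icc hβ
    have hsd := erase_symmDiff α β (n + 1)
    by_cases ha : n + 1 ∈ α <;> by_cases hb : n + 1 ∈ β
    · have hm : n + 1 ∉ α ∆ β := by simp [mem_symmDiff, ha, hb]
      rw [erase_eq_of_notMem hm] at hsd
      rw [hsd] at hm ⊢
      refine ext_succ ?_ (by simp [basis_fst, basis_snd, ha, hb, hm])
      simp [basis_fst, basis_snd, ha, hb, hm, basisSign, conj_basis n _ hβ', smul_mul,
        mul_basis n _ _ hβ' hα', symmDiff_comm (β.erase (n + 1)), smul_smul]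
    · have hm : n + 1 ∈ α ∆ β := by simp [mem_symmDiff, ha, hb]
      have hβ' := subset_Icc_of_notMem hβ hb
      rw [erase_eq_of_notMem hb] at hsd
      refine ext_succ (by simp [basis_fst, basis_snd, ha, hb, hm]) ?_
      simp [basis_fst, basis_snd, ha, hb, hm, hsd, basisSign, conj_basis n _ hβ', mul_smul,
        mul_basis n _ _ hα' hβ', smul_smul]
    · have hm : n + 1 ∈ α ∆ β := by simp [mem_symmDiff, ha, hb]
      rw [erase_eq_of_notMem ha] at hsd
      refine ext_succ (by simp [basis_fst, basis_snd, ha, hb, hm]) ?_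
      simp [basis_fst, basis_snd, ha, hb, hm, hsd, basisSign,
        mul_basis n _ _ hβ' (subset_Icc_of_notMem hα ha), symmDiff_comm]
    · have hm : n + 1 ∉ α ∆ β := by simp [mem_symmDiff, ha, hb]
      refine ext_succ ?_ (by simp [basis_fst, basis_snd, ha, hb, hm])
      simp [basis_fst, basis_snd, ha, hb, hm, basisSign,
        mul_basis n _ _ (subset_Icc_of_notMem hα ha) (subset_Icc_of_notMem hβ hb)]

@[simp] lemma basisSign_sq : ∀ n (α β : Finset ℕ), basisSign n α β ^ 2 = 1
  | 0, _, _ => one_pow 2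
  | n + 1, α, β => by
    unfold basisSign
    split_ifs <;> simp [basisSign_sq n, mul_pow]

lemma basisSign_eq_one_or_neg_one (n : ℕ) (α β : Finset ℕ) :
    basisSign n α β = 1 ∨ basisSign n α β = -1 :=
  sq_eq_one_iff.mp (basisSign_sq n α β)

lemma basisSign_ne_zero (n : ℕ) (α β : Finset ℕ) : basisSign n α β ≠ 0 := by
  rcases basisSign_eq_one_or_neg_one n α β with h | h <;> simp [h]

@[simp] lemma basisSign_empty_right : ∀ n (α : Finset ℕ), basisSign n α ∅ = 1
  | 0, _ => rfl
  | n + 1, α => by simp [basisSign, basisSign_empty_right n]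

@[simp] lemma basisSign_empty_left : ∀ n (β : Finset ℕ), basisSign n ∅ β = 1
  | 0, _ => rfl
  | n + 1, β => by simp [basisSign, basisSign_empty_left n]

lemma basisSign_self : ∀ n (α : Finset ℕ), α ⊆ Icc 1 n → basisSign n α α = conjSign α
  | 0, α, h => by simp [eq_empty_of_subset_Icc_one_zero h, basisSign]
  | n + 1, α, h => by
    by_cases hm : n + 1 ∈ α
    · simp [basisSign, hm, basisSign_self n _ (erase_subset_Icc h), conjSign_of_nonempty ⟨_, hm⟩]
    · simp [basisSign, hm, basisSign_self n _ (subset_Icc_of_notMem h hm)]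

lemma basisSign_antisymm : ∀ n (α β : Finset ℕ), α ⊆ Icc 1 n → β ⊆ Icc 1 n → α ≠ β →
    basisSign n α β = -(conjSign α * conjSign β) * basisSign n β α
  | 0, α, β, hα, hβ, hne => by
    rw [eq_empty_of_subset_Icc_one_zero hα, eq_empty_of_subset_Icc_one_zero hβ] at hne
    exact absurd rfl hne
  | n + 1, α, β, hα, hβ, hne => by
    by_cases ha : n + 1 ∈ α <;> by_cases hb : n + 1 ∈ β
    · have hne' : α.erase (n + 1) ≠ β.erase (n + 1) := fun h =>
        hne (by rw [← insert_erase ha, ← insert_erase hb, h])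
      simp only [basisSign, ha, hb, if_true, conjSign_of_nonempty ⟨_, ha⟩,
        conjSign_of_nonempty ⟨_, hb⟩,
        basisSign_antisymm n _ _ (erase_subset_Icc hβ) (erase_subset_Icc hα) hne'.symm]
      grind [conjSign_sq]
    · simp only [basisSign, ha, hb, if_true, if_false, conjSign_of_nonempty ⟨_, ha⟩]
      grind [conjSign_sq]
    · simp only [basisSign, ha, hb, if_true, if_false, conjSign_of_nonempty ⟨_, hb⟩]
      grind [conjSign_sq]
    · simp only [basisSign, ha, hb, if_false]
      exact basisSign_antisymm n _ _ (subset_Icc_of_notMem hα ha) (subset_Icc_of_notMem hβ hb) hne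

/-- Lets the induction proving `basisSign_self_symmDiff` use the mirrored identity one level
down. -/
lemma basisSign_symmDiff_self_of_self_symmDiff
    (hL : ∀ α β : Finset ℕ, α ⊆ Icc 1 n → β ⊆ Icc 1 n →
      basisSign n α (α ∆ β) = conjSign α * basisSign n α β)
    {α β : Finset ℕ} (hα : α ⊆ Icc 1 n) (hβ : β ⊆ Icc 1 n) :
    basisSign n (α ∆ β) β = conjSign β * basisSign n α β := by
  by_cases hαβ : α = β
  · subst hαβ
    simp [basisSign_self n α hα]
  obtain rfl | hα₀ := α.eq_empty_or_nonempty
  · simp [basisSign_self n β hβ]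
  rw [basisSign_antisymm n _ _ (symmDiff_subset_of_subset hα hβ) hβ (by simpa using hα₀.ne_empty),
    conjSign_of_nonempty (symmDiff_nonempty.mpr hαβ), symmDiff_comm, hL β α hβ hα,
    basisSign_antisymm n β α hβ hα (Ne.symm hαβ), conjSign_of_nonempty hα₀]
  grind [conjSign_sq]

lemma basisSign_self_symmDiff : ∀ n (α β : Finset ℕ), α ⊆ Icc 1 n → β ⊆ Icc 1 n →
    basisSign n α (α ∆ β) = conjSign α * basisSign n α β
  | 0, α, β, hα, hβ => by simp [eq_empty_of_subset_Icc_one_zero hα, basisSign]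
  | n + 1, α, β, hα, hβ => by
    have hL := basisSign_self_symmDiff n
    have hsd := erase_symmDiff α β (n + 1)
    by_cases ha : n + 1 ∈ α <;> by_cases hb : n + 1 ∈ β
    · have hm : n + 1 ∉ α ∆ β := by simp [mem_symmDiff, ha, hb]
      rw [erase_eq_of_notMem hm] at hsd
      simp only [basisSign, ha, hb, if_true, conjSign_of_nonempty ⟨_, ha⟩, hsd,
        hL _ _ (erase_subset_Icc hα) (erase_subset_Icc hβ)]
      by_cases he : α.erase (n + 1) = β.erase (n + 1)
      · rw [he, symmDiff_self, bot_eq_empty, conjSign_empty,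
          basisSign_self n _ (erase_subset_Icc hβ)]
        grind [conjSign_sq]
      · rw [basisSign_antisymm n _ _ (erase_subset_Icc hβ) (erase_subset_Icc hα) (Ne.symm he),
          conjSign_of_nonempty (symmDiff_nonempty.mpr he)]
        grind [conjSign_sq]
    · have hm : n + 1 ∈ α ∆ β := by simp [mem_symmDiff, ha, hb]
      rw [erase_eq_of_notMem hb] at hsd
      have hα' := erase_subset_Icc hα
      have hβ' := subset_Icc_of_notMem hβ hb
      simp only [basisSign, ha, hb, hm, if_true, if_false, conjSign_of_nonempty ⟨_, ha⟩, hsd,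
        symmDiff_comm (α.erase (n + 1)), basisSign_symmDiff_self_of_self_symmDiff hL hβ' hα']
      by_cases he : β = α.erase (n + 1)
      · rw [he, basisSign_self n _ hα']
        simp
      · rw [basisSign_antisymm n _ _ hβ' hα' he, conjSign_of_nonempty (symmDiff_nonempty.mpr he)]
        grind [conjSign_sq]
    · have hm : n + 1 ∈ α ∆ β := by simp [mem_symmDiff, ha, hb]
      rw [erase_eq_of_notMem ha] at hsd
      simp only [basisSign, ha, hb, hm, if_true, if_false, hsd]
      rw [symmDiff_comm, basisSign_symmDiff_self_of_self_symmDiff hL (erase_subset_Icc hβ)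
        (subset_Icc_of_notMem hα ha)]
    · have hm : n + 1 ∉ α ∆ β := by simp [mem_symmDiff, ha, hb]
      simp only [basisSign, ha, hb, hm, if_false]
      exact hL _ _ (subset_Icc_of_notMem hα ha) (subset_Icc_of_notMem hβ hb)

lemma basisSign_symmDiff_self {α β : Finset ℕ} (hα : α ⊆ Icc 1 n) (hβ : β ⊆ Icc 1 n) :
    basisSign n (α ∆ β) β = conjSign β * basisSign n α β :=
  basisSign_symmDiff_self_of_self_symmDiff (basisSign_self_symmDiff n) hα hβ

/-- The product of the signs of `(e_α e_β) e_γ` and `e_α (e_β e_γ)`. -/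
def assocSign (n : ℕ) (α β γ : Finset ℕ) : ℝ :=
  basisSign n α β * basisSign n (α ∆ β) γ * (basisSign n β γ * basisSign n α (β ∆ γ))

lemma assocSign_eq_one_or_neg_one (n : ℕ) (α β γ : Finset ℕ) :
    assocSign n α β γ = 1 ∨ assocSign n α β γ = -1 := by
  rw [← sq_eq_one_iff, assocSign]
  simp [mul_pow]

lemma assoc_smul_left (ε : ℕ → ℝ) (r : ℝ) (x y z : CD n) :
    assoc ε n (r • x) y z = r • assoc ε n x y z := by
  simp only [assoc, smul_mul, smul_sub]

lemma assoc_smul_mid (ε : ℕ → ℝ) (r : ℝ) (x y z : CD n) :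
    assoc ε n x (r • y) z = r • assoc ε n x y z := by
  simp only [assoc, smul_mul, mul_smul, smul_sub]

lemma assoc_smul_right (ε : ℕ → ℝ) (r : ℝ) (x y z : CD n) :
    assoc ε n x y (r • z) = r • assoc ε n x y z := by
  simp only [assoc, mul_smul, smul_sub]

lemma assoc_basis {α β γ : Finset ℕ} (hα : α ⊆ Icc 1 n) (hβ : β ⊆ Icc 1 n) (hγ : γ ⊆ Icc 1 n) :
    assoc1 n (basis n α) (basis n β) (basis n γ) =
      (basisSign n α β * basisSign n (α ∆ β) γ - basisSign n β γ * basisSign n α (β ∆ γ)) •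
        basis n (α ∆ β ∆ γ) := by
  rw [assoc1, assoc, mul_basis n α β hα hβ, smul_mul,
    mul_basis n _ γ (symmDiff_subset_of_subset hα hβ) hγ, mul_basis n β γ hβ hγ, mul_smul,
    mul_basis n α _ hα (symmDiff_subset_of_subset hβ hγ), smul_smul, smul_smul, ← symmDiff_assoc,
    ← sub_smul]

lemma assoc_basis_eq_zero_iff {α β γ : Finset ℕ} (hα : α ⊆ Icc 1 n) (hβ : β ⊆ Icc 1 n)
    (hγ : γ ⊆ Icc 1 n) :
    assoc1 n (basis n α) (basis n β) (basis n γ) = 0 ↔ assocSign n α β γ = 1 := by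
  rw [assoc_basis hα hβ hγ, smul_eq_zero, or_iff_left (basis_ne_zero n _), sub_eq_zero, assocSign]
  set a := basisSign n α β * basisSign n (α ∆ β) γ
  set b := basisSign n β γ * basisSign n α (β ∆ γ)
  have hb : b ^ 2 = 1 := by simp [b, mul_pow]
  constructor
  · intro h; rw [h, ← sq, hb]
  · intro h; linear_combination b * h - a * hb

/-- Three index sets that are linearly independent over `𝔽₂`, i.e. give pure basis elements
`b, c, d` with `b ≠ c`, `b ≠ d`, `c ≠ d` and `d ≠ ±(b · c)`. -/
def IsIndep (n : ℕ) (α β γ : Finset ℕ) : Prop :=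
  IsPure n α ∧ IsPure n β ∧ IsPure n γ ∧ α ≠ β ∧ α ≠ γ ∧ β ≠ γ ∧ α ∆ β ≠ γ

lemma assocSign_mul_assocSign_mul_assocSign {α β γ : Finset ℕ} (h : IsIndep n α β γ) :
    assocSign n α γ β * assocSign n α β γ * assocSign n β α γ = -1 := by
  obtain ⟨⟨hα₀, hα⟩, ⟨hβ₀, hβ⟩, ⟨hγ₀, hγ⟩, hαβ, hαγ, hβγ, hαβγ⟩ := h
  have hβ' : β ≠ α ∆ γ := fun e => hαβγ (by rw [e, symmDiff_symmDiff_cancel_left])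
  unfold assocSign
  rw [basisSign_antisymm n γ β hγ hβ hβγ.symm, basisSign_antisymm n β α hβ hα hαβ.symm,
    basisSign_antisymm n β _ hβ (symmDiff_subset_of_subset hα hγ) hβ', symmDiff_comm γ β,
    symmDiff_comm β α, conjSign_of_nonempty hα₀, conjSign_of_nonempty hβ₀,
    conjSign_of_nonempty hγ₀, conjSign_of_nonempty (symmDiff_nonempty.mpr hαγ)]
  ring_nf
  simp

lemma assocSign_self_symmDiff {α β γ : Finset ℕ} (hα : α ⊆ Icc 1 n) (hβ : β ⊆ Icc 1 n)
    (hγ : γ ⊆ Icc 1 n) : assocSign n α (α ∆ β) γ = assocSign n α β γ := by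
  unfold assocSign
  rw [symmDiff_symmDiff_cancel_left, symmDiff_assoc, basisSign_self_symmDiff n α β hα hβ,
    basisSign_self_symmDiff n α _ hα (symmDiff_subset_of_subset hβ hγ)]
  ring_nf
  simp

lemma assocSign_symmDiff_mid {α β γ : Finset ℕ} (h : IsIndep n α β γ) :
    assocSign n β (α ∆ β) γ = -(assocSign n α γ β * assocSign n α β γ) := by
  obtain ⟨⟨hα₀, hα⟩, ⟨hβ₀, hβ⟩, ⟨hγ₀, hγ⟩, hαβ, hαγ, hβγ, hαβγ⟩ := h
  have hβ' : β ≠ α ∆ γ := fun e => hαβγ (by rw [e, symmDiff_symmDiff_cancel_left])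
  have s₁ : basisSign n β (α ∆ β) = conjSign β * basisSign n β α := by
    rw [symmDiff_comm, basisSign_self_symmDiff n β α hβ hα]
  have s₂ : basisSign n β (α ∆ β ∆ γ) = conjSign β * basisSign n β (α ∆ γ) := by
    rw [symmDiff_assoc, symmDiff_left_comm,
      basisSign_self_symmDiff n β _ hβ (symmDiff_subset_of_subset hα hγ)]
  have e : β ∆ (α ∆ β) = α := by rw [symmDiff_comm α, symmDiff_symmDiff_cancel_left]
  unfold assocSign
  rw [s₁, e, s₂, basisSign_antisymm n β α hβ hα hαβ.symm,
    basisSign_antisymm n β _ hβ (symmDiff_subset_of_subset hα hγ) hβ',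
    basisSign_antisymm n γ β hγ hβ hβγ.symm, symmDiff_comm γ β,
    conjSign_of_nonempty hα₀, conjSign_of_nonempty hβ₀, conjSign_of_nonempty hγ₀,
    conjSign_of_nonempty (symmDiff_nonempty.mpr hαγ)]
  ring_nf
  simp

lemma assocSign_symmDiff_right {α β γ : Finset ℕ} (h : IsIndep n α β γ) :
    assocSign n β γ (α ∆ β) = -(assocSign n α γ β * assocSign n α γ (α ∆ β)) := by
  obtain ⟨⟨hα₀, hα⟩, ⟨hβ₀, hβ⟩, ⟨hγ₀, hγ⟩, hαβ, hαγ, hβγ, hαβγ⟩ := h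
  have hβ' : β ≠ α ∆ γ := fun e => hαβγ (by rw [e, symmDiff_symmDiff_cancel_left])
  have hαβ' := symmDiff_subset_of_subset hα hβ
  have hαγ' := symmDiff_subset_of_subset hα hγ
  have s₁ : basisSign n β (γ ∆ (α ∆ β)) = conjSign β * basisSign n β (α ∆ γ) := by
    rw [show γ ∆ (α ∆ β) = β ∆ (α ∆ γ) by simp only [symmDiff_comm, symmDiff_left_comm],
      basisSign_self_symmDiff n β _ hβ hαγ']
  have s₂ : basisSign n α (γ ∆ (α ∆ β)) = conjSign α * basisSign n α (β ∆ γ) := by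
    rw [show γ ∆ (α ∆ β) = α ∆ (β ∆ γ) by simp only [symmDiff_comm, symmDiff_left_comm],
      basisSign_self_symmDiff n α _ hα (symmDiff_subset_of_subset hβ hγ)]
  have s₃ : basisSign n (β ∆ γ) (α ∆ β) = conjSign (α ∆ β) * basisSign n (α ∆ γ) (α ∆ β) := by
    rw [show β ∆ γ = α ∆ γ ∆ (α ∆ β) by
      simp only [symmDiff_comm, symmDiff_left_comm, symmDiff_symmDiff_cancel_left],
      basisSign_symmDiff_self hαγ' hαβ']
  unfold assocSign
  rw [s₁, s₂, s₃, basisSign_antisymm n β _ hβ hαγ' hβ', basisSign_antisymm n γ β hγ hβ hβγ.symm,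
    symmDiff_comm γ β, conjSign_of_nonempty hα₀, conjSign_of_nonempty hβ₀,
    conjSign_of_nonempty hγ₀, conjSign_of_nonempty (symmDiff_nonempty.mpr hαβ),
    conjSign_of_nonempty (symmDiff_nonempty.mpr hαγ)]
  ring_nf
  simp

lemma IsTriad.isIndep {α β γ : Finset ℕ} (h : IsTriad n α β γ) : IsIndep n α β γ := by
  obtain ⟨hα, hβ, hγ, hαβ, hαγ, hβγ, hd₁, hd₂⟩ := h
  refine ⟨hα, hβ, hγ, hαβ, hαγ, hβγ, fun e => ?_⟩
  rw [mul_basis n α β hα.2 hβ.2, e] at hd₁ hd₂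
  rcases basisSign_eq_one_or_neg_one n α β with hs | hs <;> simp [hs] at hd₁ hd₂

lemma IsIndep.symmDiff_left {α β γ : Finset ℕ} (h : IsIndep n α β γ) :
    IsIndep n α (α ∆ β) γ := by
  obtain ⟨hα, hβ, hγ, hαβ, hαγ, hβγ, hαβγ⟩ := h
  refine ⟨hα, ⟨symmDiff_nonempty.mpr hαβ, symmDiff_subset_of_subset hα.2 hβ.2⟩, hγ, fun e => ?_,
    hαγ, hαβγ, by rwa [symmDiff_symmDiff_cancel_left]⟩
  exact hβ.1.ne_empty (symmDiff_eq_left.mp e.symm)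

lemma IsIndep.symmDiff_right {α β γ : Finset ℕ} (h : IsIndep n α β γ) :
    IsIndep n β (α ∆ β) γ := by
  obtain ⟨hα, hβ, hγ, hαβ, hαγ, hβγ, hαβγ⟩ := h
  refine ⟨hβ, ⟨symmDiff_nonempty.mpr hαβ, symmDiff_subset_of_subset hα.2 hβ.2⟩, hγ, fun e => ?_,
    hβγ, hαβγ, by rwa [symmDiff_comm α, symmDiff_symmDiff_cancel_left]⟩
  exact hα.1.ne_empty (symmDiff_eq_right.mp e.symm)

/-- The type of a triple whose Type 1 and Type 2 associators vanish exactly when `g₁ = 1`,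
resp. `g₂ = 1`. -/
def _root_.NAType.ofSigns (g₁ g₂ : ℝ) : NAType :=
  if g₁ = 1 then (if g₂ = 1 then .C else .B) else (if g₂ = 1 then .A else .X)

lemma hasType_ofSigns {x y z : CD n} {g₁ g₂ g₃ : ℝ} (h₁ : assoc1 n x z y = 0 ↔ g₁ = 1)
    (h₂ : assoc1 n x y z = 0 ↔ g₂ = 1) (h₃ : assoc1 n y x z = 0 ↔ g₃ = 1)
    (hg₁ : g₁ = 1 ∨ g₁ = -1) (hg₂ : g₂ = 1 ∨ g₂ = -1) (hg : g₁ * g₂ * g₃ = -1) :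
    hasType n x y z (NAType.ofSigns g₁ g₂) := by
  rcases hg₁ with rfl | rfl <;> rcases hg₂ with rfl | rfl <;> norm_num at hg <;>
    norm_num [NAType.ofSigns, hasType, h₁, h₂, h₃, hg]

lemma hasType_basis {α β γ : Finset ℕ} (h : IsIndep n α β γ) :
    hasType n (basis n α) (basis n β) (basis n γ)
      (NAType.ofSigns (assocSign n α γ β) (assocSign n α β γ)) :=
  have hα := h.1.2
  have hβ := h.2.1.2
  have hγ := h.2.2.1.2
  hasType_ofSigns (assoc_basis_eq_zero_iff hα hγ hβ) (assoc_basis_eq_zero_iff hα hβ hγ)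
    (assoc_basis_eq_zero_iff hβ hα hγ) (assocSign_eq_one_or_neg_one n α γ β)
    (assocSign_eq_one_or_neg_one n α β γ) (assocSign_mul_assocSign_mul_assocSign h)

lemma hasType_smul_mid {x y z : CD n} {r : ℝ} (hr : r ≠ 0) (T : NAType) :
    hasType n x (r • y) z T ↔ hasType n x y z T := by
  cases T <;> simp only [hasType, assoc1, assoc_smul_left, assoc_smul_mid, assoc_smul_right,
    ne_eq, smul_eq_zero, hr, false_or]

/-- The eight patterns of types of the triples `(b, c, d)`, `(b, b·c, d)`, `(c, b·c, d)`. -/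
def IsSilo (T : NAType × NAType × NAType) : Prop :=
  T = (.A, .A, .A) ∨ T = (.A, .C, .C) ∨ T = (.X, .B, .B) ∨ T = (.B, .B, .A) ∨
    T = (.B, .X, .C) ∨ T = (.C, .A, .B) ∨ T = (.C, .C, .X) ∨ T = (.X, .X, .X)

lemma isSilo_ofSigns {x₁ x₂ y₁ : ℝ} (h₁ : x₁ = 1 ∨ x₁ = -1) (h₂ : x₂ = 1 ∨ x₂ = -1)
    (h₃ : y₁ = 1 ∨ y₁ = -1) :
    IsSilo (.ofSigns x₁ x₂, .ofSigns y₁ x₂, .ofSigns (-(x₁ * y₁)) (-(x₁ * x₂))) := by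
  rcases h₁ with rfl | rfl <;> rcases h₂ with rfl | rfl <;> rcases h₃ with rfl | rfl <;>
    norm_num [IsSilo, NAType.ofSigns]

end CD

open CD

/-- (Cycles theorem.) The triples `(b,c,d)`, `(b,b·c,d)`,
`(c,b·c,d)` each have a well-defined non-associativity type, and the pattern of
types is one of the eight silos. -/
theorem stmt18 (n : ℕ) (α β γ : Finset ℕ) (h : CD.IsTriad n α β γ)
    (b c d : CD n) (hb : b = CD.basis n α) (hc : c = CD.basis n β)
    (hd : d = CD.basis n γ) :
    ∃ T₁ T₂ T₃ : NAType,
      CD.hasType n b c d T₁ ∧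
      CD.hasType n b (CD.mul1 n b c) d T₂ ∧
      CD.hasType n c (CD.mul1 n b c) d T₃ ∧
      ((T₁, T₂, T₃) = (NAType.A, NAType.A, NAType.A) ∨
       (T₁, T₂, T₃) = (NAType.A, NAType.C, NAType.C) ∨
       (T₁, T₂, T₃) = (NAType.X, NAType.B, NAType.B) ∨
       (T₁, T₂, T₃) = (NAType.B, NAType.B, NAType.A) ∨
       (T₁, T₂, T₃) = (NAType.B, NAType.X, NAType.C) ∨
       (T₁, T₂, T₃) = (NAType.C, NAType.A, NAType.B) ∨
       (T₁, T₂, T₃) = (NAType.C, NAType.C, NAType.X) ∨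
       (T₁, T₂, T₃) = (NAType.X, NAType.X, NAType.X)) := by
  subst hb hc hd
  have hI := h.isIndep
  obtain ⟨⟨-, hα⟩, ⟨-, hβ⟩, ⟨-, hγ⟩, -⟩ := h
  have hs := basisSign_ne_zero n α β
  rw [show mul1 n (basis n α) (basis n β) = _ from mul_basis n α β hα hβ]
  refine ⟨_, _, _, hasType_basis hI, (hasType_smul_mid hs _).2 (hasType_basis hI.symmDiff_left),
    (hasType_smul_mid hs _).2 (hasType_basis hI.symmDiff_right), ?_⟩
  rw [assocSign_self_symmDiff hα hβ hγ, assocSign_symmDiff_mid hI, assocSign_symmDiff_right hI]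
  exact isSilo_ofSigns (assocSign_eq_one_or_neg_one ..) (assocSign_eq_one_or_neg_one ..)
    (assocSign_eq_one_or_neg_one ..)
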